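/- Let X and Y be random variables into finite types 𝒳 and 𝒴 on a finite probability space, with joint pmf p. Let q assign to each x ∈ 𝒳 a pmf q(·|x) on 𝒴 such that q(y|x) > 0 whenever p(x,y) > 0. Then I(X;Y) ≥ ∑_{(x,y) : p(x,y)>0} p(x,y)·log q(y|x) + H(Y), with equality when q(·|x) equals the true conditional pmf p(·|x) for every x with p_X(x) > 0 (the Barber–Agakov variational lower bound on mutual information). -/
import Mathlib


open scoped Classical BigOperators

/-- The probability mass function of a random variable `X` under weights `P`. -/
noncomputable def pm {Ω α : Type*} [Fintype Ω] [Fintype α]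
    (P : Ω → ℝ) (X : Ω → α) (x : α) : ℝ :=
  ∑ ω, if X ω = x then P ω else 0

/-- Shannon entropy (natural log, convention `0 * log 0 = 0`). -/
noncomputable def Hf {Ω α : Type*} [Fintype Ω] [Fintype α]
    (P : Ω → ℝ) (X : Ω → α) : ℝ :=
  -∑ x, pm P X x * Real.log (pm P X x)

/-- Mutual information `I(X;Y) = H(X) + H(Y) - H(X,Y)`. -/
noncomputable def MI {Ω α β : Type*} [Fintype Ω] [Fintype α] [Fintype β]
    (P : Ω → ℝ) (X : Ω → α) (Y : Ω → β) : ℝ :=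
  Hf P X + Hf P Y - Hf P (fun ω => (X ω, Y ω))

/-- Conditional entropy `H(X|Y) = H(X,Y) - H(Y)`. -/
noncomputable def CE {Ω α β : Type*} [Fintype Ω] [Fintype α] [Fintype β]
    (P : Ω → ℝ) (X : Ω → α) (Y : Ω → β) : ℝ :=
  Hf P (fun ω => (X ω, Y ω)) - Hf P Y

/-- Conditional mutual information
`I(X;Y|Z) = H(X,Z) + H(Y,Z) - H(X,Y,Z) - H(Z)`. -/
noncomputable def CMI {Ω α β γ : Type*} [Fintype Ω] [Fintype α] [Fintype β] [Fintype γ]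
    (P : Ω → ℝ) (X : Ω → α) (Y : Ω → β) (Z : Ω → γ) : ℝ :=
  Hf P (fun ω => (X ω, Z ω)) + Hf P (fun ω => (Y ω, Z ω))
    - Hf P (fun ω => (X ω, Y ω, Z ω)) - Hf P Z

/-- `X` and `Y` are conditionally independent given `Z`. -/
def CondIndep {Ω α β γ : Type*} [Fintype Ω] [Fintype α] [Fintype β] [Fintype γ]
    (P : Ω → ℝ) (X : Ω → α) (Y : Ω → β) (Z : Ω → γ) : Prop :=
  ∀ x y z, pm P (fun ω => (X ω, Y ω, Z ω)) (x, y, z) * pm P Z z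
    = pm P (fun ω => (X ω, Z ω)) (x, z) * pm P (fun ω => (Y ω, Z ω)) (y, z)


lemma pm_nonneg {Ω α : Type*} [Fintype Ω] [Fintype α]
    (P : Ω → ℝ) (hP0 : ∀ ω, 0 ≤ P ω) (X : Ω → α) (x : α) : 0 ≤ pm P X x := by
  apply Finset.sum_nonneg; intro ω _; split <;> simp [hP0 ω]

lemma pm_sum {Ω α : Type*} [Fintype Ω] [Fintype α]
    (P : Ω → ℝ) (X : Ω → α) : ∑ x, pm P X x = ∑ ω, P ω := by
  unfold pm
  rw [Finset.sum_comm]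
  exact Finset.sum_congr rfl fun ω _ => by simp

lemma pm_marginal_fst {Ω α β : Type*} [Fintype Ω] [Fintype α] [Fintype β]
    (P : Ω → ℝ) (X : Ω → α) (Y : Ω → β) (x : α) :
    ∑ y, pm P (fun ω => (X ω, Y ω)) (x, y) = pm P X x := by
  unfold pm
  rw [Finset.sum_comm]
  refine Finset.sum_congr rfl fun ω _ => ?_
  simp [Prod.ext_iff, ite_and]

/-- Barber–Agakov variational lower bound:
`I(X;Y) ≥ ∑_{(x,y):p(x,y)>0} p(x,y)·log q(y|x) + H(Y)`, with equality when
`q(·|x)` is the true conditional pmf for every `x` with `p_X(x) > 0`. -/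
theorem stmt_9 {Ω 𝒳 𝒴 : Type*} [Fintype Ω] [Fintype 𝒳] [Fintype 𝒴]
    (P : Ω → ℝ) (hP0 : ∀ ω, 0 ≤ P ω) (hP1 : ∑ ω, P ω = 1)
    (X : Ω → 𝒳) (Y : Ω → 𝒴)
    (q : 𝒳 → 𝒴 → ℝ) (hq0 : ∀ x y, 0 ≤ q x y) (hq1 : ∀ x, ∑ y, q x y = 1)
    (hqpos : ∀ x y, 0 < pm P (fun ω => (X ω, Y ω)) (x, y) → 0 < q x y) :
    MI P X Y
      ≥ (∑ p ∈ Finset.univ.filter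
            (fun p : 𝒳 × 𝒴 => 0 < pm P (fun ω => (X ω, Y ω)) p),
          pm P (fun ω => (X ω, Y ω)) p * Real.log (q p.1 p.2))
        + Hf P Y
    ∧ ((∀ x, 0 < pm P X x →
          ∀ y, q x y = pm P (fun ω => (X ω, Y ω)) (x, y) / pm P X x) →
        MI P X Y
          = (∑ p ∈ Finset.univ.filter
                (fun p : 𝒳 × 𝒴 => 0 < pm P (fun ω => (X ω, Y ω)) p),
              pm P (fun ω => (X ω, Y ω)) p * Real.log (q p.1 p.2))
            + Hf P Y) := by
  classical
  set pj : 𝒳 × 𝒴 → ℝ := pm P (fun ω => (X ω, Y ω)) with hpj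
  set pX : 𝒳 → ℝ := pm P X with hpX
  have hpnn : ∀ z, 0 ≤ pj z := fun z => pm_nonneg P hP0 _ z
  have hmarg : ∀ x, ∑ y, pj (x, y) = pX x := fun x => pm_marginal_fst P X Y x
  have hple : ∀ x y, pj (x, y) ≤ pX x := by
    intro x y
    rw [← hmarg x]
    exact Finset.single_le_sum (f := fun y => pj (x, y)) (fun y _ => hpnn _)
      (Finset.mem_univ y)
  have hpXsum : ∑ x, pX x = 1 := by rw [hpX, pm_sum, hP1]
  have hsum1 : ∑ z : 𝒳 × 𝒴, pj z = 1 := by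
    rw [Fintype.sum_prod_type]
    simp only [hmarg]
    exact hpXsum
  set F : Finset (𝒳 × 𝒴) := Finset.univ.filter (fun z : 𝒳 × 𝒴 => 0 < pj z) with hF
  have hsumF : ∑ z ∈ F, pj z = 1 := by
    rw [← hsum1]
    exact Finset.sum_filter_of_ne (fun z _ hne => lt_of_le_of_ne (hpnn z) (Ne.symm hne))
  have hH2 : ∑ z : 𝒳 × 𝒴, pj z * Real.log (pX z.1) = ∑ x, pX x * Real.log (pX x) := by
    rw [Fintype.sum_prod_type]
    refine Finset.sum_congr rfl fun x _ => ?_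
    simp only [← Finset.sum_mul, hmarg]
  have hkey : MI P X Y - Hf P Y
      = ∑ z ∈ F, pj z * (Real.log (pj z) - Real.log (pX z.1)) := by
    have h1 : MI P X Y - Hf P Y = Hf P X - Hf P (fun ω => (X ω, Y ω)) := by
      unfold MI; ring
    have h3 : Hf P X - Hf P (fun ω => (X ω, Y ω))
        = (∑ z : 𝒳 × 𝒴, pj z * Real.log (pj z)) - ∑ x, pX x * Real.log (pX x) := by
      unfold Hf; rw [hpj, hpX]; ring
    have h4 : ∑ z : 𝒳 × 𝒴, pj z * (Real.log (pj z) - Real.log (pX z.1))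
        = (∑ z : 𝒳 × 𝒴, pj z * Real.log (pj z)) - ∑ z : 𝒳 × 𝒴, pj z * Real.log (pX z.1) := by
      rw [← Finset.sum_sub_distrib]
      exact Finset.sum_congr rfl fun z _ => by ring
    have h5 : ∑ z ∈ F, pj z * (Real.log (pj z) - Real.log (pX z.1))
        = ∑ z : 𝒳 × 𝒴, pj z * (Real.log (pj z) - Real.log (pX z.1)) :=
      Finset.sum_filter_of_ne (fun z _ hne => by
        by_contra h
        have h0 : pj z = 0 := le_antisymm (not_lt.mp h) (hpnn z)
        simp [h0] at hne)
    rw [h1, h3, h5, h4, hH2]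
  have hmemF : ∀ z ∈ F, 0 < pj z := fun z hz => (Finset.mem_filter.mp hz).2
  have hterm : ∀ z ∈ F, pj z - pX z.1 * q z.1 z.2
      ≤ pj z * (Real.log (pj z) - Real.log (pX z.1) - Real.log (q z.1 z.2)) := by
    rintro ⟨x, y⟩ hz
    have ha : 0 < pj (x, y) := hmemF _ hz
    have hb : 0 < pX x := lt_of_lt_of_le ha (hple x y)
    have hc : 0 < q x y := hqpos x y ha
    have hr : 0 < pX x * q x y / pj (x, y) := by positivity
    have hlog := Real.log_le_sub_one_of_pos hr
    rw [Real.log_div (by positivity) ha.ne', Real.log_mul hb.ne' hc.ne'] at hlog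
    have hmul := mul_le_mul_of_nonneg_left hlog ha.le
    have hd : pj (x, y) * (pX x * q x y / pj (x, y)) = pX x * q x y := by
      field_simp
    nlinarith [hmul, hd]
  have hsumq : ∑ z ∈ F, pX z.1 * q z.1 z.2 ≤ 1 := by
    calc ∑ z ∈ F, pX z.1 * q z.1 z.2
        ≤ ∑ z : 𝒳 × 𝒴, pX z.1 * q z.1 z.2 :=
          Finset.sum_le_sum_of_subset_of_nonneg (Finset.filter_subset _ _)
            (fun z _ _ => mul_nonneg (pm_nonneg P hP0 X z.1) (hq0 z.1 z.2))
      _ = 1 := by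
          rw [Fintype.sum_prod_type]
          simp only [← Finset.mul_sum, hq1, mul_one]
          exact hpXsum
  have hDnn : 0 ≤ ∑ z ∈ F, pj z * (Real.log (pj z) - Real.log (pX z.1) - Real.log (q z.1 z.2)) := by
    have h := Finset.sum_le_sum hterm
    have h2 : ∑ z ∈ F, (pj z - pX z.1 * q z.1 z.2)
        = 1 - ∑ z ∈ F, pX z.1 * q z.1 z.2 := by
      rw [Finset.sum_sub_distrib, hsumF]
    linarith
  have hsplit : ∑ z ∈ F, pj z * (Real.log (pj z) - Real.log (pX z.1) - Real.log (q z.1 z.2))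
      = (∑ z ∈ F, pj z * (Real.log (pj z) - Real.log (pX z.1)))
        - ∑ z ∈ F, pj z * Real.log (q z.1 z.2) := by
    rw [← Finset.sum_sub_distrib]
    exact Finset.sum_congr rfl fun z _ => by ring
  constructor
  · rw [ge_iff_le]
    linarith
  · intro heq
    have hEq : ∑ z ∈ F, pj z * Real.log (q z.1 z.2)
        = ∑ z ∈ F, pj z * (Real.log (pj z) - Real.log (pX z.1)) := by
      refine Finset.sum_congr rfl ?_
      rintro ⟨x, y⟩ hz
      have ha : 0 < pj (x, y) := hmemF _ hz
      have hb : 0 < pX x := lt_of_lt_of_le ha (hple x y)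
      rw [heq x hb y, Real.log_div ha.ne' hb.ne']
    linarith
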